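/- Let F(s) = C * (sI − A)^{-1} * B and F_m(s) = C_m * (sI_m − A_m)^{-1} * B_m with A_m = V_m^T * A * V_m, B_m = V_m^T * B, C_m = C * V_m, where V_m has orthonormal blocks (V_m^T * V_m = I_m) and the decomposition A * V_m = V_m * A_m + Γ_m holds with Γ_m = (V_m * V_m^T − I) * A * V_{m+1} * H_{m+1,m} * E_m^T * H_m^{-1}. If moreover V_m * B_m = B, then F(s) − F_m(s) = C * (sI − A)^{-1} * Γ_m * (sI_m − A_m)^{-1} * B_m, and hence ‖F(s) − F_m(s)‖ ≤ ‖C * (sI − A)^{-1}‖ · ‖Γ_m * (sI_m − A_m)^{-1} * B_m‖. -/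
import Mathlib


open Matrix

/-- Multi-index type: an `N`-tuple of indices with mode sizes `d i`. -/
abbrev Idx {N : ℕ} (d : Fin N → ℕ) : Type := ∀ i, Fin (d i)

/-- The Einstein product, contracting over the middle multi-index `K`:
`(A *_M B)_{j,i} = ∑_k A_{j,k} B_{k,i}`. -/
def eprod {J K I : Type*} [Fintype K] (A : Matrix J K ℝ) (B : Matrix K I ℝ) :
    Matrix J I ℝ :=
  Matrix.of fun j i => ∑ k, A j k * B k i

/-- The identity (diagonal) tensor. -/
def idT (J : Type*) [DecidableEq J] : Matrix J J ℝ :=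
  Matrix.of fun j i => if j = i then 1 else 0
/-- The trace of a square tensor. -/
def ttr {J : Type*} [Fintype J] (A : Matrix J J ℝ) : ℝ := ∑ j, A j j

/-- The Frobenius tensor norm. -/
noncomputable def fnorm {J K : Type*} [Fintype J] [Fintype K] (X : Matrix J K ℝ) : ℝ :=
  Real.sqrt (ttr (eprod Xᵀ X))

lemma eprod_eq_mul {J K I : Type*} [Fintype K] (A : Matrix J K ℝ) (B : Matrix K I ℝ) :
    eprod A B = A * B := by
  ext j i; simp [eprod, Matrix.mul_apply]

lemma idT_eq_one (J : Type*) [DecidableEq J] : idT J = 1 := by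
  ext j i; simp [idT, Matrix.one_apply]

attribute [local instance] Matrix.frobeniusSeminormedAddCommGroup

lemma fnorm_eq_norm {J K : Type*} [Fintype J] [Fintype K] (X : Matrix J K ℝ) :
    fnorm X = ‖X‖ := by
  rw [Matrix.frobenius_norm_def, fnorm, ttr, Real.sqrt_eq_rpow]
  congr 1
  rw [Finset.sum_comm]
  refine Finset.sum_congr rfl fun k _ => Finset.sum_congr rfl fun j _ => ?_
  simp [eprod, Real.norm_eq_abs]
  ring

lemma fnorm_mul_le {J K I : Type*} [Fintype J] [Fintype K] [Fintype I]
    (A : Matrix J K ℝ) (B : Matrix K I ℝ) :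
    fnorm (A * B) ≤ fnorm A * fnorm B := by
  simp only [fnorm_eq_norm]
  exact Matrix.frobenius_norm_mul A B

/-- error formula and bound for the transfer function in the tensor
rational block Arnoldi method. -/
theorem transfer_function_error_arnoldi {J1 J2 K1 K2 I1 I2 m : ℕ}
    (A : Matrix (Fin J1 × Fin J2) (Fin J1 × Fin J2) ℝ)
    (B : Matrix (Fin J1 × Fin J2) (Fin K1 × Fin K2) ℝ)
    (C : Matrix (Fin I1 × Fin I2) (Fin J1 × Fin J2) ℝ)
    (V : Matrix (Fin J1 × Fin J2) (Fin K1 × Fin (m * K2)) ℝ)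
    (s : ℝ)
    -- reduced tensors A_m = Vᵀ A V, B_m = Vᵀ B, C_m = C V :
    (Am : Matrix (Fin K1 × Fin (m * K2)) (Fin K1 × Fin (m * K2)) ℝ)
    (Bm : Matrix (Fin K1 × Fin (m * K2)) (Fin K1 × Fin K2) ℝ)
    (Cm : Matrix (Fin I1 × Fin I2) (Fin K1 × Fin (m * K2)) ℝ)
    (hAm : Am = eprod Vᵀ (eprod A V)) (hBm : Bm = eprod Vᵀ B) (hCm : Cm = eprod C V)
    -- orthonormality Vᵀ V = I_m :
    (horth : eprod Vᵀ V = idT (Fin K1 × Fin (m * K2)))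
    -- Γ_m = (V Vᵀ − I) * A * V_{m+1} * H_{m+1,m} * E_mᵀ * H_m⁻¹ :
    (Vnext : Matrix (Fin J1 × Fin J2) (Fin K1 × Fin K2) ℝ)
    (Hsub : Matrix (Fin K1 × Fin K2) (Fin K1 × Fin K2) ℝ)
    (E : Matrix (Fin K1 × Fin (m * K2)) (Fin K1 × Fin K2) ℝ)
    (Hinv : Matrix (Fin K1 × Fin (m * K2)) (Fin K1 × Fin (m * K2)) ℝ)
    (Γm : Matrix (Fin J1 × Fin J2) (Fin K1 × Fin (m * K2)) ℝ)
    (hΓm : Γm = eprod (eprod (eprod (eprod (eprod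
        (eprod V Vᵀ - idT (Fin J1 × Fin J2)) A) Vnext) Hsub) Eᵀ) Hinv)
    -- the Arnoldi decomposition A V = V A_m + Γ_m :
    (hdecomp : eprod A V = eprod V Am + Γm)
    -- Rinv = (sI − A)⁻¹ and Rm = (sI_m − A_m)⁻¹ (two-sided inverses) :
    (Rinv : Matrix (Fin J1 × Fin J2) (Fin J1 × Fin J2) ℝ)
    (hRinv : eprod (s • idT (Fin J1 × Fin J2) - A) Rinv = idT (Fin J1 × Fin J2) ∧
             eprod Rinv (s • idT (Fin J1 × Fin J2) - A) = idT (Fin J1 × Fin J2))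
    (Rm : Matrix (Fin K1 × Fin (m * K2)) (Fin K1 × Fin (m * K2)) ℝ)
    (hRm : eprod (s • idT (Fin K1 × Fin (m * K2)) - Am) Rm = idT (Fin K1 × Fin (m * K2)) ∧
           eprod Rm (s • idT (Fin K1 × Fin (m * K2)) - Am) = idT (Fin K1 × Fin (m * K2)))
    -- V B_m = B :
    (hVB : eprod V Bm = B) :
    -- F(s) − F_m(s) = C (sI−A)⁻¹ Γ_m (sI_m−A_m)⁻¹ B_m, and the norm bound :
    eprod (eprod C Rinv) B - eprod (eprod Cm Rm) Bm
      = eprod (eprod (eprod C Rinv) Γm) (eprod Rm Bm) ∧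
    fnorm (eprod (eprod C Rinv) B - eprod (eprod Cm Rm) Bm)
      ≤ fnorm (eprod C Rinv) * fnorm (eprod Γm (eprod Rm Bm)) := by
  simp only [eprod_eq_mul, idT_eq_one] at *
  have key : Rinv * V - V * Rm = Rinv * Γm * Rm := by
    have h1 : Rinv * V = Rinv * ((s • V - V * Am) * Rm) := by
      have hv : V * (s • (1 : Matrix (Fin K1 × Fin (m * K2)) (Fin K1 × Fin (m * K2)) ℝ)
          - Am) = s • V - V * Am := by
        rw [Matrix.mul_sub, Matrix.mul_smul, Matrix.mul_one]
      conv_lhs => rw [← Matrix.mul_one V, ← hRm.1]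
      rw [← Matrix.mul_assoc V, hv]
    have h2 : V * Rm = Rinv * ((s • V - A * V) * Rm) := by
      have hv : (s • (1 : Matrix (Fin J1 × Fin J2) (Fin J1 × Fin J2) ℝ) - A) * V
          = s • V - A * V := by
        rw [Matrix.sub_mul, Matrix.smul_mul, Matrix.one_mul]
      conv_lhs => rw [← Matrix.one_mul V, ← hRinv.2]
      rw [Matrix.mul_assoc Rinv, hv, Matrix.mul_assoc]
    rw [h1, h2, ← Matrix.mul_sub, ← Matrix.sub_mul, sub_sub_sub_cancel_left,
      hdecomp, add_sub_cancel_left, ← Matrix.mul_assoc]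
  have heq : C * Rinv * B - Cm * Rm * Bm = C * Rinv * Γm * (Rm * Bm) := by
    rw [hCm, ← hVB]
    calc C * Rinv * (V * Bm) - C * V * Rm * Bm
        = C * ((Rinv * V - V * Rm) * Bm) := by
          rw [Matrix.sub_mul, Matrix.mul_sub]
          simp only [Matrix.mul_assoc]
      _ = C * (Rinv * Γm * Rm * Bm) := by rw [key]
      _ = C * Rinv * Γm * (Rm * Bm) := by simp only [Matrix.mul_assoc]
  refine ⟨heq, ?_⟩
  rw [heq]
  calc fnorm (C * Rinv * Γm * (Rm * Bm))
      = fnorm ((C * Rinv) * (Γm * (Rm * Bm))) := by rw [Matrix.mul_assoc]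
    _ ≤ fnorm (C * Rinv) * fnorm (Γm * (Rm * Bm)) := fnorm_mul_le _ _
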